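/- For every real δ with 0 < δ < 1, every integer p ≥ 3, and every real τ with τ ≥ g_{p−1}(δ) = 2√δ cos(π/(p−1)), the number H_p(τ,δ) is real and strictly positive. -/

import Mathlib

/-!
Context: given real τ, δ with δ > 0, let λ₁ = (τ + √(τ²−4δ))/2 and
λ₂ = (τ − √(τ²−4δ))/2 (complex principal square root).
H_p(τ,δ) = Σ_{j=1}^{p−1} Σ_{k=1}^{j} λ₁^{k−j} λ₂^{1−k}.
g_q(δ) = 2√δ cos(π/q).
-/

/-- λ₁ = (τ + √(τ²−4δ))/2, using the complex principal square root. -/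
noncomputable def lam1 (τ δ : ℝ) : ℂ :=
  ((τ : ℂ) + ((τ : ℂ) ^ 2 - 4 * (δ : ℂ)) ^ ((1 : ℂ) / 2)) / 2

/-- λ₂ = (τ − √(τ²−4δ))/2, using the complex principal square root. -/
noncomputable def lam2 (τ δ : ℝ) : ℂ :=
  ((τ : ℂ) - ((τ : ℂ) ^ 2 - 4 * (δ : ℂ)) ^ ((1 : ℂ) / 2)) / 2

/-- H_p(τ,δ) = Σ_{j=1}^{p−1} Σ_{k=1}^{j} λ₁^{k−j} λ₂^{1−k}
(indices shifted: j = j'+1, k = k'+1). -/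
noncomputable def Hp (p : ℕ) (τ δ : ℝ) : ℂ :=
  ∑ j ∈ Finset.range (p - 1), ∑ k ∈ Finset.range (j + 1),
    lam1 τ δ ^ ((k : ℤ) - (j : ℤ)) * lam2 τ δ ^ (-(k : ℤ))

/-!
Both roots enter only through λ₁ + λ₂ = τ and λ₁λ₂ = δ. Multiplying the inner sum of `Hp`
by (λ₁λ₂)^j turns it into the complete homogeneous sum ∑ λ₁^k λ₂^(j-k), which is the Lucas
sequence U_{j+1}(τ, δ). Hence H_p = ∑_{j < p-1} U_{j+1}(τ, δ) / δ^j is real, with first term 1.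
Writing δ = s², the other terms are nonnegative: if τ ≥ 2s then s U_n ≤ U_{n+1} keeps the
sequence positive; otherwise τ = 2s cos θ with 0 < θ ≤ π/(p-1), and
U_{n+1} sin θ = sⁿ sin((n+1)θ) ≥ 0 as long as n + 1 ≤ p - 1.
-/

open Finset Real

def lucasU {R : Type*} [CommRing R] (P Q : R) : ℕ → R
  | 0 => 0
  | 1 => 1
  | n + 2 => P * lucasU P Q (n + 1) - Q * lucasU P Q n

section CommRing

variable {R S : Type*} [CommRing R] [CommRing S]

@[simp] lemma lucasU_zero (P Q : R) : lucasU P Q 0 = 0 := rfl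

@[simp] lemma lucasU_one (P Q : R) : lucasU P Q 1 = 1 := rfl

lemma lucasU_add_two (P Q : R) (n : ℕ) :
    lucasU P Q (n + 2) = P * lucasU P Q (n + 1) - Q * lucasU P Q n := rfl

lemma map_lucasU (f : R →+* S) (P Q : R) (n : ℕ) :
    f (lucasU P Q n) = lucasU (f P) (f Q) n := by
  induction n using Nat.twoStepInduction with
  | zero => simp
  | one => simp
  | more n ih₀ ih₁ => simp [lucasU_add_two, ih₀, ih₁]

lemma lucasU_add_mul (x y : R) (n : ℕ) :
    lucasU (x + y) (x * y) n = ∑ i ∈ range n, x ^ i * y ^ (n - 1 - i) := by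
  induction n using Nat.twoStepInduction with
  | zero => simp
  | one => simp
  | more n ih₀ ih₁ =>
    have h₁ := geom_sum₂_succ_eq x y (n := n)
    have h₂ := geom_sum₂_succ_eq x y (n := n + 1)
    simp only [Nat.add_sub_cancel] at ih₁ h₂
    rw [lucasU_add_two, ih₀, ih₁, show n + 2 - 1 = n + 1 from rfl, h₂]
    linear_combination x * h₁

end CommRing

lemma zpow_sub_mul_zpow_neg {K : Type*} [Field K] {x y : K} (hx : x ≠ 0) (hy : y ≠ 0)
    {j k : ℕ} (hkj : k ≤ j) :
    x ^ ((k : ℤ) - j) * y ^ (-(k : ℤ)) = x ^ k * y ^ (j - k) / (x * y) ^ j := by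
  rw [zpow_sub₀ hx, zpow_neg, zpow_natCast, zpow_natCast, zpow_natCast, pow_sub₀ _ hy hkj, mul_pow]
  field_simp

lemma sum_zpow_sub_mul_zpow_neg {K : Type*} [Field K] {x y : K} (hx : x ≠ 0) (hy : y ≠ 0)
    (j : ℕ) :
    ∑ k ∈ range (j + 1), x ^ ((k : ℤ) - j) * y ^ (-(k : ℤ)) =
      lucasU (x + y) (x * y) (j + 1) / (x * y) ^ j := by
  rw [lucasU_add_mul, sum_div, Nat.add_sub_cancel]
  exact sum_congr rfl fun k hk ↦ zpow_sub_mul_zpow_neg hx hy (Nat.lt_succ_iff.1 (mem_range.1 hk))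

lemma lucasU_two_mul_cos_mul_sin (s θ : ℝ) (n : ℕ) :
    lucasU (2 * s * cos θ) (s ^ 2) (n + 1) * sin θ = s ^ n * sin ((n + 1) * θ) := by
  induction n using Nat.twoStepInduction with
  | zero => simp
  | one =>
    rw [lucasU_add_two, lucasU_one, lucasU_zero, show ((1 : ℕ) + 1 : ℝ) * θ = 2 * θ by norm_num,
      sin_two_mul]
    ring
  | more n ih₀ ih₁ =>
    have hsin : sin ((n + 2 + 1) * θ) =
        2 * sin ((n + 1 + 1) * θ) * cos θ - sin ((n + 1) * θ) := by
      rw [show (n + 2 + 1) * θ = (n + 1 + 1) * θ + θ by ring,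
        show (n + 1) * θ = (n + 1 + 1) * θ - θ by ring, sin_add, sin_sub]
      ring
    push_cast at ih₀ ih₁ ⊢
    rw [lucasU_add_two]
    linear_combination 2 * s * cos θ * ih₁ - s ^ 2 * ih₀ - s ^ (n + 2) * hsin

lemma lucasU_succ_pos_of_two_mul_le {s P : ℝ} (hs : 0 < s) (hP : 2 * s ≤ P) (n : ℕ) :
    0 < lucasU P (s ^ 2) (n + 1) := by
  suffices h : ∀ n, 0 < lucasU P (s ^ 2) (n + 1) ∧
      s * lucasU P (s ^ 2) (n + 1) ≤ lucasU P (s ^ 2) (n + 2) from (h n).1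
  intro n
  induction n with
  | zero =>
    rw [zero_add, lucasU_one, lucasU_add_two, lucasU_one, lucasU_zero]
    constructor <;> linarith
  | succ n ih =>
    obtain ⟨hpos, hle⟩ := ih
    have hpos' : 0 < lucasU P (s ^ 2) (n + 2) := lt_of_lt_of_le (by positivity) hle
    refine ⟨hpos', ?_⟩
    rw [lucasU_add_two P _ (n + 1)]
    nlinarith [mul_le_mul_of_nonneg_left hle hs.le]

lemma lucasU_nonneg_of_two_mul_cos_le {s P m : ℝ} (hs : 0 < s) (hm : 1 < m)
    (hP : 2 * s * cos (π / m) ≤ P) {n : ℕ} (hn : (n : ℝ) ≤ m) : 0 ≤ lucasU P (s ^ 2) n := by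
  rcases n with _ | n
  · simp
  rcases le_or_gt (2 * s) P with hbig | hsmall
  · exact (lucasU_succ_pos_of_two_mul_le hs hbig n).le
  have hπm : 0 < π / m := div_pos pi_pos (by linarith)
  have hπm' : π / m < π := div_lt_self pi_pos hm
  set θ := arccos (P / (2 * s))
  have hc : cos (π / m) ≤ P / (2 * s) := by rw [le_div_iff₀ (by positivity)]; linarith
  have hθ_pos : 0 < θ := arccos_pos.2 (by rw [div_lt_one (by positivity)]; exact hsmall)
  have hθ_le : θ ≤ π / m := (arccos_le_arccos hc).trans_eq (arccos_cos hπm.le hπm'.le)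
  have hPθ : P = 2 * s * cos θ := by
    have hc₁ : P / (2 * s) ≤ 1 := by rw [div_le_one (by positivity)]; linarith
    rw [cos_arccos (by linarith [neg_one_le_cos (π / m)]) hc₁]
    field_simp
  have hsin : 0 ≤ sin ((n + 1) * θ) := by
    apply sin_nonneg_of_nonneg_of_le_pi (by positivity)
    calc (n + 1) * θ ≤ m * (π / m) := by push_cast at hn; gcongr
      _ = π := by field_simp
  have key := lucasU_two_mul_cos_mul_sin s θ n
  rw [← hPθ] at key
  refine nonneg_of_mul_nonneg_left ?_ (sin_pos_of_pos_of_lt_pi hθ_pos (hθ_le.trans_lt hπm'))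
  rw [key]
  positivity

lemma lam1_add_lam2 (τ δ : ℝ) : lam1 τ δ + lam2 τ δ = τ := by
  unfold lam1 lam2
  ring

lemma lam1_mul_lam2 (τ δ : ℝ) : lam1 τ δ * lam2 τ δ = δ := by
  have hsq : (((τ : ℂ) ^ 2 - 4 * δ) ^ ((1 : ℂ) / 2)) ^ 2 = (τ : ℂ) ^ 2 - 4 * δ := by
    simp
  unfold lam1 lam2
  linear_combination -hsq / 4

lemma Hp_eq_ofReal {δ : ℝ} (hδ : δ ≠ 0) (p : ℕ) (τ : ℝ) :
    Hp p τ δ = ((∑ j ∈ range (p - 1), lucasU τ δ (j + 1) / δ ^ j : ℝ) : ℂ) := by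
  have hprod : lam1 τ δ * lam2 τ δ ≠ 0 := by rw [lam1_mul_lam2]; exact_mod_cast hδ
  simp only [Hp, sum_zpow_sub_mul_zpow_neg (left_ne_zero_of_mul hprod)
    (right_ne_zero_of_mul hprod), lam1_add_lam2, lam1_mul_lam2]
  push_cast
  simp only [← Complex.ofRealHom_eq_coe, map_lucasU]

theorem Hp_pos_general (δ : ℝ) (hδ0 : 0 < δ) (p : ℕ) (hp : 3 ≤ p)
    (τ : ℝ) (hτ : 2 * Real.sqrt δ * Real.cos (Real.pi / ((p : ℝ) - 1)) ≤ τ) :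
    ∃ r : ℝ, Hp p τ δ = (r : ℂ) ∧ 0 < r := by
  refine ⟨_, Hp_eq_ofReal hδ0.ne' p τ, sum_pos' (fun j hj ↦ div_nonneg ?_ (by positivity))
    ⟨0, mem_range.2 (by omega), by simp⟩⟩
  have hp' : (1 : ℝ) < p - 1 := by
    rw [lt_sub_iff_add_lt]; exact_mod_cast (by omega : 1 + 1 < p)
  have hj : ((j + 1 : ℕ) : ℝ) ≤ p - 1 := by
    have := mem_range.1 hj
    rw [le_sub_iff_add_le]; exact_mod_cast (by omega : j + 1 + 1 ≤ p)
  simpa [sq_sqrt hδ0.le] using lucasU_nonneg_of_two_mul_cos_le (sqrt_pos.2 hδ0) hp' hτ hj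

/-- For 0 < δ < 1, p ≥ 3, and τ ≥ g_{p−1}(δ) = 2√δ cos(π/(p−1)),
the number H_p(τ,δ) is real and strictly positive. -/
theorem Hp_pos (δ : ℝ) (hδ0 : 0 < δ) (hδ1 : δ < 1) (p : ℕ) (hp : 3 ≤ p)
    (τ : ℝ) (hτ : 2 * Real.sqrt δ * Real.cos (Real.pi / ((p : ℝ) - 1)) ≤ τ) :
    ∃ r : ℝ, Hp p τ δ = (r : ℂ) ∧ 0 < r :=
  Hp_pos_general δ hδ0 p hp τ hτ
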